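/- arXiv:1901.01052 — 2 statements merged into one kernel-verified Lean document; each statement's English description precedes it below -/
import Mathlib

section
/- Let φ ∈ C^2 in a neighborhood of x ∈ ℝ^N. Then for every unit vector v, (1/2)φ(x + εv) + (1/2)φ(x − εv) − φ(x) = (ε^2/2)⟨D^2φ(x) v, v⟩ + o(ε^2) as ε → 0, uniformly over unit vectors v. Consequently, (2/ε^2)[ inf_{dim S = j} sup_{v∈S,|v|=1} ( (1/2)φ(x+εv) + (1/2)φ(x−εv) ) − φ(x) ] → λ_j(D^2 φ(x)) as ε → 0. -/
open Matrix Filter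

/-- The Hessian matrix of `f : ℝ^N → ℝ` at `x`. -/
noncomputable def hess (N : ℕ) (f : (Fin N → ℝ) → ℝ) (x : Fin N → ℝ) :
    Matrix (Fin N) (Fin N) ℝ :=
  fun i j => iteratedFDeriv ℝ 2 f x ![Pi.single i 1, Pi.single j 1]

/-- The `j`-th smallest eigenvalue of a symmetric matrix via the inf-sup formula. -/
noncomputable def lamInfSup (N j : ℕ) (M : Matrix (Fin N) (Fin N) ℝ) : ℝ :=
  ⨅ S : {S : Submodule ℝ (Fin N → ℝ) // Module.finrank ℝ S = j},
    ⨆ v : {v : Fin N → ℝ // v ∈ S.1 ∧ v ⬝ᵥ v = 1}, (M.mulVec v.1) ⬝ᵥ v.1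

open Set Topology Asymptotics

/-! The symmetric second difference `½ f (x + h) + ½ f (x - h) - f x - ½ D²f(x) h h`, restricted
to the segment `t ↦ t • h`, has derivative half the difference of the first-order Taylor
remainders of `Df` at `± t • h`. These are `o(‖h‖)` because `Df` is differentiable at `x`, so the
mean value inequality makes the second difference `o(‖h‖²)` uniformly in the direction of `h`.
The increasing affine map `t ↦ φ x + ε² / 2 * t` commutes with the inf-sup, and inf-sups of
uniformly close bounded families are close, so the rescaled inf-sups converge to the inf-sup of
the Hessian quadratic form. -/

section InfSup

variable {ι : Sort*} {κ : ι → Sort*}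

lemma bddAbove_range_of_abs_le {g : ι → ℝ} {K : ℝ} (hK : ∀ i, |g i| ≤ K) :
    BddAbove (range g) :=
  ⟨K, forall_mem_range.2 fun i => (abs_le.1 (hK i)).2⟩

lemma bddBelow_range_of_abs_le {g : ι → ℝ} {K : ℝ} (hK : ∀ i, |g i| ≤ K) :
    BddBelow (range g) :=
  ⟨-K, forall_mem_range.2 fun i => (abs_le.1 (hK i)).1⟩

lemma abs_ciSup_le [Nonempty ι] {g : ι → ℝ} {K : ℝ} (hK : ∀ i, |g i| ≤ K) :
    |⨆ i, g i| ≤ K := by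
  obtain ⟨i⟩ := ‹Nonempty ι›
  refine abs_le.2 ⟨?_, ciSup_le fun i => (abs_le.1 (hK i)).2⟩
  exact (abs_le.1 (hK i)).1.trans (le_ciSup (bddAbove_range_of_abs_le hK) i)

lemma abs_ciSup_sub_ciSup_le [Nonempty ι] {f g : ι → ℝ} {c K : ℝ}
    (hg : ∀ i, |g i| ≤ K) (hfg : ∀ i, |f i - g i| ≤ c) :
    |(⨆ i, f i) - ⨆ i, g i| ≤ c := by
  have hf : ∀ i, |f i| ≤ K + c := fun i => by
    linarith [abs_sub_abs_le_abs_sub (f i) (g i), hg i, hfg i]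
  rw [abs_sub_le_iff, sub_le_iff_le_add, sub_le_iff_le_add]
  constructor
  · exact ciSup_le fun i => by
      linarith [(abs_le.1 (hfg i)).2, le_ciSup (bddAbove_range_of_abs_le hg) i]
  · exact ciSup_le fun i => by
      linarith [(abs_le.1 (hfg i)).1, le_ciSup (bddAbove_range_of_abs_le hf) i]

lemma abs_ciInf_sub_ciInf_le [Nonempty ι] {f g : ι → ℝ} {c K : ℝ}
    (hg : ∀ i, |g i| ≤ K) (hfg : ∀ i, |f i - g i| ≤ c) :
    |(⨅ i, f i) - ⨅ i, g i| ≤ c := by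
  have hf : ∀ i, |f i| ≤ K + c := fun i => by
    linarith [abs_sub_abs_le_abs_sub (f i) (g i), hg i, hfg i]
  rw [abs_sub_le_iff]
  constructor <;> rw [sub_le_comm]
  · exact le_ciInf fun i => by
      linarith [(abs_le.1 (hfg i)).2, ciInf_le (bddBelow_range_of_abs_le hf) i]
  · exact le_ciInf fun i => by
      linarith [(abs_le.1 (hfg i)).1, ciInf_le (bddBelow_range_of_abs_le hg) i]

lemma abs_ciInf_ciSup_sub_ciInf_ciSup_le [Nonempty ι] [∀ i, Nonempty (κ i)]
    {f g : ∀ i, κ i → ℝ} {c K : ℝ} (hg : ∀ i k, |g i k| ≤ K)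
    (hfg : ∀ i k, |f i k - g i k| ≤ c) :
    |(⨅ i, ⨆ k, f i k) - ⨅ i, ⨆ k, g i k| ≤ c :=
  abs_ciInf_sub_ciInf_le (fun i => abs_ciSup_le (hg i))
    fun i => abs_ciSup_sub_ciSup_le (hg i) (hfg i)

lemma OrderIso.map_ciInf_ciSup [Nonempty ι] [∀ i, Nonempty (κ i)] (e : ℝ ≃o ℝ)
    {g : ∀ i, κ i → ℝ} {K : ℝ} (hg : ∀ i k, |g i k| ≤ K) :
    e (⨅ i, ⨆ k, g i k) = ⨅ i, ⨆ k, e (g i k) := by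
  rw [e.map_ciInf (bddBelow_range_of_abs_le fun i => abs_ciSup_le (hg i))]
  exact iInf_congr fun i => e.map_ciSup (bddAbove_range_of_abs_le (hg i))

lemma tendsto_ciInf_ciSup_of_uniform [Nonempty ι] [∀ i, Nonempty (κ i)]
    {m : ℝ → ∀ i, κ i → ℝ} {q : ∀ i, κ i → ℝ} {a K : ℝ} (hq : ∀ i k, |q i k| ≤ K)
    (hm : ∀ η : ℝ, 0 < η → ∃ ε₀ > 0, ∀ ε : ℝ, 0 < ε → ε < ε₀ →
      ∀ i k, |m ε i k - a - (ε ^ 2 / 2) * q i k| ≤ η * ε ^ 2) :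
    Tendsto (fun ε => (2 / ε ^ 2) * ((⨅ i, ⨆ k, m ε i k) - a)) (𝓝[>] 0)
      (𝓝 (⨅ i, ⨆ k, q i k)) := by
  rw [Metric.tendsto_nhdsWithin_nhds]
  intro θ hθ
  obtain ⟨ε₀, hε₀, hm⟩ := hm (θ / 4) (by positivity)
  refine ⟨ε₀, hε₀, fun {ε} (hε : 0 < ε) hεε₀ => ?_⟩
  rw [Real.dist_eq, sub_zero, abs_of_pos hε] at hεε₀
  have hs : 0 < ε ^ 2 / 2 := by positivity
  let e : ℝ ≃o ℝ := (OrderIso.mulLeft₀ _ hs).trans (OrderIso.addLeft a)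
  have he : ∀ t, e t = a + ε ^ 2 / 2 * t := fun t => rfl
  have hclose : |(⨅ i, ⨆ k, m ε i k) - e (⨅ i, ⨆ k, q i k)| ≤ θ / 4 * ε ^ 2 := by
    rw [e.map_ciInf_ciSup hq]
    refine abs_ciInf_ciSup_sub_ciInf_ciSup_le (K := |a| + ε ^ 2 / 2 * K) (fun i k => ?_)
      fun i k => ?_
    · rw [he]
      calc |a + ε ^ 2 / 2 * q i k| ≤ |a| + ε ^ 2 / 2 * |q i k| :=
            (abs_add_le _ _).trans_eq (by rw [abs_mul, abs_of_pos hs])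
        _ ≤ |a| + ε ^ 2 / 2 * K := by gcongr; exact hq i k
    · rw [he, ← sub_sub]
      exact hm ε hε hεε₀ i k
  calc |(2 / ε ^ 2) * ((⨅ i, ⨆ k, m ε i k) - a) - ⨅ i, ⨆ k, q i k|
      = |(2 / ε ^ 2) * ((⨅ i, ⨆ k, m ε i k) - e (⨅ i, ⨆ k, q i k))| := by
        rw [he]; congr 1; field_simp; ring
    _ = (2 / ε ^ 2) * |(⨅ i, ⨆ k, m ε i k) - e (⨅ i, ⨆ k, q i k)| := by
        rw [abs_mul, abs_of_pos (by positivity)]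
    _ ≤ (2 / ε ^ 2) * (θ / 4 * ε ^ 2) := by gcongr
    _ < θ := by field_simp; linarith

end InfSup

section SecondDifference

variable {E F : Type*} [NormedAddCommGroup E] [NormedSpace ℝ E] [NormedAddCommGroup F]
  [NormedSpace ℝ F] {f : E → F} {f' : E → E →L[ℝ] F} {f'' : E →L[ℝ] E →L[ℝ] F} {x : E}

lemma HasFDerivAt.hasDerivAt_comp_add_smul {h : E} {t : ℝ} {L : E →L[ℝ] F}
    (hf : HasFDerivAt f L (x + t • h)) : HasDerivAt (fun s : ℝ => f (x + s • h)) (L h) t := by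
  have := hf.comp_hasDerivAt t (((hasDerivAt_id t).smul_const h).const_add x)
  rwa [one_smul] at this

theorem isLittleO_symmetric_second_difference (hf : ∀ᶠ y in 𝓝 x, HasFDerivAt f (f' y) y)
    (hf' : HasFDerivAt f' f'' x) :
    (fun h => (1 / 2 : ℝ) • f (x + h) + (1 / 2 : ℝ) • f (x - h) - f x - (1 / 2 : ℝ) • f'' h h)
      =o[𝓝 0] fun h => ‖h‖ ^ 2 := by
  refine isLittleO_iff.2 fun c hc => ?_
  have hf0 : ∀ᶠ k in 𝓝 (0 : E), HasFDerivAt f (f' (x + k)) (x + k) :=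
    (continuous_const_add x).tendsto' 0 x (add_zero x) |>.eventually hf
  obtain ⟨δ, hδ, hball⟩ := Metric.eventually_nhds_iff_ball.1
    ((hasFDerivAt_iff_isLittleO_nhds_zero.1 hf').def hc |>.and hf0)
  filter_upwards [Metric.ball_mem_nhds 0 hδ] with h hh
  have hD : ∀ t ∈ Icc (0 : ℝ) 1, ∀ k : E, ‖k‖ = ‖h‖ →
      HasFDerivAt f (f' (x + t • k)) (x + t • k) ∧
        ‖(f' (x + t • k) - f' x - f'' (t • k)) h‖ ≤ c * ‖h‖ ^ 2 := by
    intro t ht k hk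
    have htk : ‖t • k‖ ≤ ‖h‖ := by
      rw [norm_smul, Real.norm_eq_abs, abs_of_nonneg ht.1, hk]
      exact mul_le_of_le_one_left (norm_nonneg h) ht.2
    obtain ⟨hbound, hderiv⟩ := hball (t • k) (mem_ball_zero_iff.2 (htk.trans_lt
      (mem_ball_zero_iff.1 hh)))
    refine ⟨hderiv, (ContinuousLinearMap.le_opNorm _ h).trans ?_⟩
    calc _ ≤ c * ‖t • k‖ * ‖h‖ := by gcongr
      _ ≤ c * ‖h‖ * ‖h‖ := by gcongr
      _ = c * ‖h‖ ^ 2 := by ring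
  set G : ℝ → F := fun t => (1 / 2 : ℝ) • f (x + t • h) + (1 / 2 : ℝ) • f (x + t • -h) - f x -
    (t ^ 2 / 2) • f'' h h
  set G' : ℝ → F := fun t => (1 / 2 : ℝ) • f' (x + t • h) h + (1 / 2 : ℝ) • f' (x + t • -h) (-h) -
    t • f'' h h
  have hG : ∀ t ∈ Icc (0 : ℝ) 1, HasDerivAt G (G' t) t := by
    intro t ht
    have hsq : HasDerivAt (fun s : ℝ => (s ^ 2 / 2) • f'' h h) (t • f'' h h) t := by
      convert ((hasDerivAt_pow 2 t).div_const 2).smul_const (f'' h h) using 2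
      ring
    exact ((((hD t ht h rfl).1.hasDerivAt_comp_add_smul.const_smul (1 / 2 : ℝ)).add
      ((hD t ht (-h) (norm_neg h)).1.hasDerivAt_comp_add_smul.const_smul (1 / 2 : ℝ))).sub_const
      (f x)).sub hsq
  have hG' : ∀ t ∈ Ico (0 : ℝ) 1, ‖G' t‖ ≤ c * ‖h‖ ^ 2 := by
    intro t ht
    have hsplit : G' t = (1 / 2 : ℝ) • (f' (x + t • h) - f' x - f'' (t • h)) h -
        (1 / 2 : ℝ) • (f' (x + t • -h) - f' x - f'' (t • -h)) h := by
      simp only [G', _root_.sub_apply, map_smul, map_neg, _root_.smul_apply, _root_.neg_apply]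
      module
    have h₁ := (hD t (Ico_subset_Icc_self ht) h rfl).2
    have h₂ := (hD t (Ico_subset_Icc_self ht) (-h) (norm_neg h)).2
    rw [hsplit]
    refine (norm_sub_le _ _).trans ?_
    rw [norm_smul, norm_smul, Real.norm_eq_abs, abs_of_pos one_half_pos]
    linarith
  have hmvt := norm_image_sub_le_of_norm_deriv_le_segment' (fun t ht => (hG t ht).hasDerivWithinAt)
    hG' 1 (right_mem_Icc.2 zero_le_one)
  have hG0 : G 0 = 0 := by simp only [G, zero_smul, add_zero]; module
  have hG1 : G 1 = (1 / 2 : ℝ) • f (x + h) + (1 / 2 : ℝ) • f (x - h) - f x -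
      (1 / 2 : ℝ) • f'' h h := by
    simp only [G, one_smul, sub_eq_add_neg]; norm_num
  rw [hG0, hG1, sub_zero, sub_zero, mul_one] at hmvt
  rwa [Real.norm_eq_abs, abs_of_nonneg (by positivity)]

end SecondDifference

lemma hess_eq_toMatrix₂' (N : ℕ) (f : (Fin N → ℝ) → ℝ) (x : Fin N → ℝ) :
    hess N f x = LinearMap.toMatrix₂' ℝ (fderiv ℝ (fderiv ℝ f) x).toLinearMap₁₂ := by
  ext i j
  simp [hess, iteratedFDeriv_two_apply]

lemma hess_mulVec_dotProduct (N : ℕ) (f : (Fin N → ℝ) → ℝ) (x v : Fin N → ℝ) :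
    hess N f x *ᵥ v ⬝ᵥ v = fderiv ℝ (fderiv ℝ f) x v v := by
  rw [dotProduct_comm, ← Matrix.toLinearMap₂'_apply', hess_eq_toMatrix₂',
    Matrix.toLinearMap₂'_toMatrix']
  rfl

lemma norm_le_one_of_dotProduct_self_eq_one {ι : Type*} [Fintype ι] {v : ι → ℝ}
    (hv : v ⬝ᵥ v = 1) : ‖v‖ ≤ 1 := by
  refine (pi_norm_le_iff_of_nonneg zero_le_one).2 fun i => ?_
  rw [Real.norm_eq_abs, ← sq_le_one_iff_abs_le_one, sq, ← hv]
  exact Finset.single_le_sum (fun k _ => mul_self_nonneg (v k)) (Finset.mem_univ i)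

lemma exists_mem_dotProduct_self_eq_one {ι : Type*} [Fintype ι] {S : Submodule ℝ (ι → ℝ)}
    (hS : S ≠ ⊥) : ∃ v ∈ S, v ⬝ᵥ v = 1 := by
  obtain ⟨w, hwS, hw⟩ := S.exists_mem_ne_zero_of_ne_bot hS
  have hpos : 0 < w ⬝ᵥ w :=
    lt_of_le_of_ne (Finset.sum_nonneg fun i _ => mul_self_nonneg (w i))
      (Ne.symm (dotProduct_self_eq_zero.not.2 hw))
  refine ⟨(√(w ⬝ᵥ w))⁻¹ • w, S.smul_mem _ hwS, ?_⟩
  rw [smul_dotProduct, dotProduct_smul, smul_smul, smul_eq_mul, ← mul_inv, Real.mul_self_sqrt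
    hpos.le, inv_mul_cancel₀ hpos.ne']

lemma Submodule.exists_finrank_eq {K V : Type*} [DivisionRing K] [AddCommGroup V] [Module K V]
    [Module.Finite K V] {j : ℕ} (hj : j ≤ Module.finrank K V) :
    ∃ S : Submodule K V, Module.finrank K S = j := by
  obtain ⟨b, hb⟩ := exists_linearIndependent_of_le_finrank hj
  exact ⟨Submodule.span K (range b), by rw [finrank_span_eq_card hb, Fintype.card_fin]⟩

lemma abs_hess_mulVec_dotProduct_le {N : ℕ} {f : (Fin N → ℝ) → ℝ} {x v : Fin N → ℝ}
    (hv : v ⬝ᵥ v = 1) : |hess N f x *ᵥ v ⬝ᵥ v| ≤ ‖fderiv ℝ (fderiv ℝ f) x‖ := by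
  have hv1 := norm_le_one_of_dotProduct_self_eq_one hv
  rw [hess_mulVec_dotProduct, ← Real.norm_eq_abs]
  calc _ ≤ ‖fderiv ℝ (fderiv ℝ f) x‖ * ‖v‖ * ‖v‖ := ContinuousLinearMap.le_opNorm₂ _ _ _
    _ ≤ ‖fderiv ℝ (fderiv ℝ f) x‖ * 1 * 1 := by gcongr
    _ = _ := by ring

lemma abs_symmetric_second_difference_sub_hess_le {N : ℕ} {φ : (Fin N → ℝ) → ℝ} {x : Fin N → ℝ}
    (hφ : ContDiffAt ℝ 2 φ x) {η : ℝ} (hη : 0 < η) :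
    ∃ ε₀ > 0, ∀ ε : ℝ, 0 < ε → ε < ε₀ → ∀ v : Fin N → ℝ, v ⬝ᵥ v = 1 →
      |(1 / 2) * φ (x + ε • v) + (1 / 2) * φ (x - ε • v) - φ x -
          (ε ^ 2 / 2) * (hess N φ x *ᵥ v ⬝ᵥ v)| ≤ η * ε ^ 2 := by
  have hf : ∀ᶠ y in 𝓝 x, HasFDerivAt φ (fderiv ℝ φ y) y :=
    (hφ.eventually (by simp)).mono fun y hy => (hy.differentiableAt two_ne_zero).hasFDerivAt
  have hf' : HasFDerivAt (fderiv ℝ φ) (fderiv ℝ (fderiv ℝ φ) x) x :=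
    ((hφ.fderiv_right (m := 1) le_rfl).differentiableAt one_ne_zero).hasFDerivAt
  obtain ⟨δ, hδ, hball⟩ :=
    Metric.eventually_nhds_iff_ball.1 ((isLittleO_symmetric_second_difference hf hf').def hη)
  refine ⟨δ, hδ, fun ε hε hεδ v hv => ?_⟩
  have hεv : ‖ε • v‖ ≤ ε := by
    rw [norm_smul, Real.norm_eq_abs, abs_of_pos hε]
    exact mul_le_of_le_one_right hε.le (norm_le_one_of_dotProduct_self_eq_one hv)
  have := hball (ε • v) (mem_ball_zero_iff.2 (hεv.trans_lt hεδ))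
  rw [hess_mulVec_dotProduct]
  calc _ = ‖(1 / 2 : ℝ) • φ (x + ε • v) + (1 / 2 : ℝ) • φ (x - ε • v) - φ x -
        (1 / 2 : ℝ) • fderiv ℝ (fderiv ℝ φ) x (ε • v) (ε • v)‖ := by
        simp only [map_smul, _root_.smul_apply, smul_eq_mul, Real.norm_eq_abs]
        ring_nf
    _ ≤ η * ‖‖ε • v‖ ^ 2‖ := this
    _ ≤ η * ε ^ 2 := by
        rw [norm_pow, norm_norm]
        gcongr

/-- Second-order Taylor expansion, uniform in unit directions:
`½φ(x+εv) + ½φ(x-εv) - φ(x) = (ε²/2)⟨D²φ(x)v,v⟩ + o(ε²)`; consequently the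
rescaled inf-sup of the two-point means converges to `λ_j(D²φ(x))` as `ε → 0⁺`. -/
theorem stmt16 (N j : ℕ) (hj : 1 ≤ j) (hjN : j ≤ N)
    (φ : (Fin N → ℝ) → ℝ) (x : Fin N → ℝ) (hφ : ContDiffAt ℝ 2 φ x) :
    (∀ η : ℝ, 0 < η → ∃ ε₀ > 0, ∀ ε : ℝ, 0 < ε → ε < ε₀ →
      ∀ v : Fin N → ℝ, v ⬝ᵥ v = 1 →
        |(1 / 2) * φ (x + ε • v) + (1 / 2) * φ (x - ε • v) - φ x -
            (ε ^ 2 / 2) * (((hess N φ x).mulVec v) ⬝ᵥ v)| ≤ η * ε ^ 2) ∧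
      Tendsto (fun ε : ℝ => (2 / ε ^ 2) *
          ((⨅ S : {S : Submodule ℝ (Fin N → ℝ) // Module.finrank ℝ S = j},
              ⨆ v : {v : Fin N → ℝ // v ∈ S.1 ∧ v ⬝ᵥ v = 1},
                ((1 / 2) * φ (x + ε • v.1) + (1 / 2) * φ (x - ε • v.1))) - φ x))
        (nhdsWithin 0 (Set.Ioi 0)) (nhds (lamInfSup N j (hess N φ x))) := by
  have hTaylor := fun η (hη : 0 < η) => abs_symmetric_second_difference_sub_hess_le hφ hη
  refine ⟨hTaylor, ?_⟩
  have hSubspace : Nonempty {S : Submodule ℝ (Fin N → ℝ) // Module.finrank ℝ S = j} :=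
    nonempty_subtype.2 (Submodule.exists_finrank_eq (by rwa [Module.finrank_fin_fun]))
  have hSphere (S : {S : Submodule ℝ (Fin N → ℝ) // Module.finrank ℝ S = j}) :
      Nonempty {v : Fin N → ℝ // v ∈ S.1 ∧ v ⬝ᵥ v = 1} :=
    nonempty_subtype.2 (exists_mem_dotProduct_self_eq_one
      (Submodule.one_le_finrank_iff.1 (hj.trans_eq S.2.symm)))
  exact tendsto_ciInf_ciSup_of_uniform (fun S v => abs_hess_mulVec_dotProduct_le v.2.2)
    fun η hη => (hTaylor η hη).imp fun ε₀ ⟨hε₀, h⟩ =>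
      ⟨hε₀, fun ε hε hεε₀ S v => h ε hε hεε₀ v.1 v.2.2⟩
end

section
/- Every bounded strictly convex domain Ω ⊂ ℝ^N satisfies condition (F_j) for every 1 ≤ j ≤ N: for every y ∈ ∂Ω there exists r > 0 such that for every δ > 0 there exist a j-dimensional subspace T ⊆ ℝ^N, a unit vector w ∈ ℝ^N, and λ, θ > 0 with {x ∈ Ω ∩ B_r(y) ∩ T_λ : ⟨w, x − y⟩ < θ} ⊆ B_δ(y), where T_λ = {x ∈ ℝ^N : dist(x − y, T) < λ}. -/
open Metric
open scoped RealInnerProductSpace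

/-- Every bounded strictly convex domain `Ω ⊂ ℝ^N` satisfies condition `(F_j)` for
every `1 ≤ j ≤ N`: for each boundary point `y` there is `r > 0` such that for every
`δ > 0` there are a `j`-dimensional subspace `T`, a unit vector `w`, and `λ, θ > 0`
with `{x ∈ Ω ∩ B_r(y) ∩ T_λ : ⟨w, x - y⟩ < θ} ⊆ B_δ(y)`, where
`T_λ = {x : dist(x - y, T) < λ}`. -/
theorem stmt17 (N : ℕ) (hN : 1 ≤ N) (Ω : Set (EuclideanSpace ℝ (Fin N)))
    (hΩo : IsOpen Ω) (hΩb : Bornology.IsBounded Ω) (hΩne : Ω.Nonempty)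
    (hconv : ∀ x ∈ closure Ω, ∀ y ∈ closure Ω, x ≠ y → openSegment ℝ x y ⊆ Ω) :
    ∀ j : ℕ, 1 ≤ j → j ≤ N → ∀ y ∈ frontier Ω, ∃ r > 0, ∀ δ > 0,
      ∃ T : Submodule ℝ (EuclideanSpace ℝ (Fin N)), Module.finrank ℝ T = j ∧
        ∃ w : EuclideanSpace ℝ (Fin N), ‖w‖ = 1 ∧ ∃ lam > 0, ∃ θ > 0,
          {x | x ∈ Ω ∧ x ∈ ball y r ∧
              Metric.infDist (x - y) (T : Set (EuclideanSpace ℝ (Fin N))) < lam ∧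
              ⟪w, x - y⟫ < θ} ⊆ ball y δ := by
  intro j hj1 hjN y hy
  -- Ω is convex
  have hΩconv : Convex ℝ Ω := by
    intro a ha b hb s t hs ht hst
    rcases eq_or_ne a b with rfl | hab
    · rw [← add_smul, hst, one_smul]; exact ha
    rcases eq_or_lt_of_le hs with rfl | hs'
    · simp only [zero_smul, zero_add]
      rw [show t = 1 by linarith, one_smul]; exact hb
    rcases eq_or_lt_of_le ht with rfl | ht'
    · simp only [zero_smul, add_zero]
      rw [show s = 1 by linarith, one_smul]; exact ha
    exact hconv a (subset_closure ha) b (subset_closure hb) hab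
      ⟨s, t, hs', ht', hst, rfl⟩
  have hyΩ : y ∉ Ω := fun h => hy.2 (by rw [hΩo.interior_eq]; exact h)
  have hycl : y ∈ closure Ω := hy.1
  -- supporting functional
  obtain ⟨f, hf⟩ := geometric_hahn_banach_open_point hΩconv hΩo hyΩ
  set v : EuclideanSpace ℝ (Fin N) := (InnerProductSpace.toDual ℝ (EuclideanSpace ℝ (Fin N))).symm f with hv
  have hvinner : ∀ x : EuclideanSpace ℝ (Fin N), ⟪v, x⟫ = f x := fun x =>
    InnerProductSpace.toDual_symm_apply
  have hvne : v ≠ 0 := by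
    intro h0
    obtain ⟨a, ha⟩ := hΩne
    have h1 := hvinner a
    have h2 := hvinner y
    rw [h0, inner_zero_left] at h1 h2
    have := hf a ha
    rw [← h1, ← h2] at this
    exact lt_irrefl _ this
  set w : EuclideanSpace ℝ (Fin N) := -(‖v‖⁻¹ • v) with hw
  have hwnorm : ‖w‖ = 1 := by
    rw [hw, norm_neg, norm_smul, norm_inv, norm_norm,
      inv_mul_cancel₀ (norm_ne_zero_iff.mpr hvne)]
  -- key positivity on Ω
  have hpos : ∀ x ∈ Ω, 0 < ⟪w, x - y⟫ := by
    intro x hx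
    have := hf x hx
    have h1 : ⟪v, x - y⟫ < 0 := by
      rw [inner_sub_right, hvinner, hvinner]; linarith
    rw [hw, inner_neg_left, inner_smul_left]
    simp only [RCLike.conj_to_real]
    have : ‖v‖⁻¹ * ⟪v, x - y⟫ < 0 :=
      mul_neg_of_pos_of_neg (inv_pos.mpr (norm_pos_iff.mpr hvne)) h1
    linarith
  -- positivity on closure away from y
  have hposcl : ∀ x ∈ closure Ω, x ≠ y → 0 < ⟪w, x - y⟫ := by
    intro x hx hxy
    obtain ⟨z, hz⟩ : (openSegment ℝ x y).Nonempty := by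
      refine ⟨(1/2 : ℝ) • x + (1/2 : ℝ) • y, 1/2, 1/2, by norm_num, by norm_num,
        by norm_num, rfl⟩
    have hzΩ := hconv x hx y hycl hxy hz
    obtain ⟨s, t, hs, ht, hst, hzeq⟩ := hz
    have hz2 := hpos z hzΩ
    have hzy : z - y = s • (x - y) := by
      rw [← hzeq]
      have : y = s • y + t • y := by rw [← add_smul, hst, one_smul]
      rw [smul_sub]
      rw [show s • x + t • y - y = s • x + t • y - (s • y + t • y) by rw [← this]]
      abel
    rw [hzy, inner_smul_right] at hz2
    nlinarith
  -- the subspace T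
  have hli : LinearIndependent ℝ
      (fun i : Fin j => (EuclideanSpace.basisFun (Fin N) ℝ).toBasis
        (Fin.castLE hjN i)) :=
    (EuclideanSpace.basisFun (Fin N) ℝ).toBasis.linearIndependent.comp
      (Fin.castLE hjN) (Fin.castLE_injective hjN)
  set T : Submodule ℝ (EuclideanSpace ℝ (Fin N)) := Submodule.span ℝ
    (Set.range fun i : Fin j => (EuclideanSpace.basisFun (Fin N) ℝ).toBasis
      (Fin.castLE hjN i)) with hT
  have hTrank : Module.finrank ℝ T = j := by
    rw [hT, finrank_span_eq_card hli, Fintype.card_fin]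
  refine ⟨1, one_pos, fun δ hδ => ⟨T, hTrank, w, hwnorm, 1, one_pos, ?_⟩⟩
  -- compact set K
  have hclcompact : IsCompact (closure Ω) :=
    isCompact_of_isClosed_isBounded isClosed_closure hΩb.closure
  set K : Set (EuclideanSpace ℝ (Fin N)) := closure Ω \ ball y δ with hK
  have hKcompact : IsCompact K :=
    hclcompact.of_isClosed_subset (isClosed_closure.sdiff isOpen_ball)
      Set.diff_subset
  rcases K.eq_empty_or_nonempty with hKe | hKne
  · refine ⟨1, one_pos, fun x hx => ?_⟩
    by_contra hxb
    exact Set.eq_empty_iff_forall_notMem.mp hKe x ⟨subset_closure hx.1, hxb⟩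
  · obtain ⟨x₀, hx₀K, hx₀min⟩ := hKcompact.exists_isMinOn hKne
      (Continuous.continuousOn
        (continuous_const.inner (continuous_id.sub continuous_const) :
          Continuous fun x : EuclideanSpace ℝ (Fin N) => ⟪w, x - y⟫))
    have hx₀ne : x₀ ≠ y := by
      intro h
      have := hx₀K.2
      rw [h] at this
      exact this (mem_ball_self hδ)
    have hθpos : 0 < ⟪w, x₀ - y⟫ := hposcl x₀ hx₀K.1 hx₀ne
    refine ⟨⟪w, x₀ - y⟫, hθpos, fun x hx => ?_⟩
    by_contra hxb
    exact absurd (hx₀min ⟨subset_closure hx.1, hxb⟩) (not_le.mpr hx.2.2.2)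
end
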